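/- For every x with 0 < x < 1/2, writing q = Φ̄^{−1}(x), one has log(q²/(q²+1)) ≤ q²/2 − log(1/x) + log(√(2π)·q) ≤ 0. -/

import Mathlib

open Real

/-- Standard normal density. -/
noncomputable def gphi (t : ℝ) : ℝ := (Real.sqrt (2 * Real.pi))⁻¹ * Real.exp (-(t ^ 2) / 2)

/-- Standard normal upper-tail (survival) function. -/
noncomputable def Phibar (t : ℝ) : ℝ := ∫ s in Set.Ioi t, gphi s

/-- Inverse of the standard normal upper-tail function. -/
noncomputable def PhibarInv (x : ℝ) : ℝ := Function.invFun Phibar x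

/-!
Writing `φ = gphi`, the middle expression equals `log (q Φ̄(q) / φ(q))`, so the claim is the pair
of Mills-ratio bounds `q / (q² + 1) · φ(q) ≤ Φ̄(q) ≤ φ(q) / q` for `q > 0`. Both come from comparing
`φ` on `(q, ∞)` with `-F'` for a function `F` vanishing at infinity: `F = φ / q` (as `t / q ≥ 1`)
and `F t = t / (t² + 1) · φ(t)`, whose derivative is `-(1 - 2 / (t² + 1)²) φ(t)`. The quantile
exists because `Φ̄` is continuous with limits `1` and `0` at `∓∞`, and it is positive because
`Φ̄` is strictly decreasing with `Φ̄(0) = 1/2`.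
-/

open MeasureTheory ProbabilityTheory Set Filter Topology

section ComparisonWithDerivative

variable {f f' g : ℝ → ℝ} {a : ℝ}

theorem setIntegral_Ioi_le_of_le_neg_deriv (hf : ∀ t ∈ Ici a, HasDerivAt f (f' t) t)
    (hf' : IntegrableOn f' (Ioi a)) (hf_top : Tendsto f atTop (𝓝 0))
    (hg : IntegrableOn g (Ioi a)) (hgf : ∀ t ∈ Ioi a, g t ≤ -f' t) :
    ∫ t in Ioi a, g t ≤ f a := by
  calc ∫ t in Ioi a, g t ≤ ∫ t in Ioi a, -f' t :=
        setIntegral_mono_on hg hf'.neg measurableSet_Ioi hgf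
    _ = f a := by rw [integral_neg, integral_Ioi_of_hasDerivAt_of_tendsto' hf hf' hf_top]; ring

theorem le_setIntegral_Ioi_of_neg_deriv_le (hf : ∀ t ∈ Ici a, HasDerivAt f (f' t) t)
    (hf' : IntegrableOn f' (Ioi a)) (hf_top : Tendsto f atTop (𝓝 0))
    (hg : IntegrableOn g (Ioi a)) (hfg : ∀ t ∈ Ioi a, -f' t ≤ g t) :
    f a ≤ ∫ t in Ioi a, g t := by
  calc f a = ∫ t in Ioi a, -f' t := by
        rw [integral_neg, integral_Ioi_of_hasDerivAt_of_tendsto' hf hf' hf_top]; ring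
    _ ≤ ∫ t in Ioi a, g t := setIntegral_mono_on hf'.neg hg measurableSet_Ioi hfg

end ComparisonWithDerivative

theorem gphi_eq_gaussianPDFReal : gphi = gaussianPDFReal 0 1 := by
  ext t
  simp [gphi, gaussianPDFReal]

theorem gphi_pos (t : ℝ) : 0 < gphi t := by
  rw [gphi_eq_gaussianPDFReal]
  exact gaussianPDFReal_pos 0 1 t one_ne_zero

theorem integrable_gphi : Integrable gphi := by
  rw [gphi_eq_gaussianPDFReal]
  exact integrable_gaussianPDFReal 0 1

theorem integral_gphi : ∫ t, gphi t = 1 := by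
  rw [gphi_eq_gaussianPDFReal]
  exact integral_gaussianPDFReal_eq_one 0 one_ne_zero

theorem hasDerivAt_gphi (t : ℝ) : HasDerivAt gphi (-t * gphi t) t := by
  have := (((hasDerivAt_pow 2 t).neg.div_const 2).exp).const_mul (√(2 * π))⁻¹
  exact this.congr_deriv (by simp only [gphi, Pi.neg_apply]; push_cast; ring)

theorem integrable_mul_gphi : Integrable fun t => t * gphi t := by
  have := (integrable_mul_exp_neg_mul_sq (by norm_num : (0:ℝ) < 1/2)).const_mul
    (√(2 * π))⁻¹
  convert this using 2 with t
  simp only [gphi]; ring_nf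

theorem tendsto_gphi_atTop : Tendsto gphi atTop (𝓝 0) := by
  have h : Tendsto (fun t : ℝ => -(t ^ 2) / 2) atTop atBot :=
    (tendsto_neg_atTop_atBot.comp (tendsto_pow_atTop two_ne_zero)).atBot_div_const two_pos
  have := (tendsto_exp_atBot.comp h).const_mul (√(2 * π))⁻¹
  rw [mul_zero] at this
  exact this

theorem Phibar_nonneg (t : ℝ) : 0 ≤ Phibar t :=
  setIntegral_nonneg measurableSet_Ioi fun s _ => (gphi_pos s).le

theorem Phibar_sub_Phibar (a b : ℝ) : Phibar a - Phibar b = ∫ t in a..b, gphi t :=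
  intervalIntegral.integral_Ioi_sub_Ioi' integrable_gphi.integrableOn integrable_gphi.integrableOn

theorem Phibar_strictAnti : StrictAnti Phibar := fun a b hab => by
  have := intervalIntegral.intervalIntegral_pos_of_pos integrable_gphi.intervalIntegrable
    gphi_pos hab
  rw [← Phibar_sub_Phibar] at this
  linarith

theorem continuous_Phibar : Continuous Phibar := by
  have : Phibar = fun t => Phibar 0 - ∫ s in (0:ℝ)..t, gphi s := by
    ext t; rw [← Phibar_sub_Phibar]; ring
  rw [this]
  exact continuous_const.sub
    (intervalIntegral.continuous_primitive (fun _ _ => integrable_gphi.intervalIntegrable) 0)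

theorem Phibar_neg (t : ℝ) : Phibar (-t) = 1 - Phibar t := by
  have hsymm : Phibar (-t) = ∫ s in Iic t, gphi s := by
    rw [Phibar, ← integral_comp_neg_Iic]
    simp [gphi]
  rw [hsymm, eq_sub_iff_add_eq, Phibar,
    intervalIntegral.integral_Iic_add_Ioi integrable_gphi.integrableOn integrable_gphi.integrableOn,
    integral_gphi]

theorem Phibar_zero : Phibar 0 = 1 / 2 := by
  have := Phibar_neg 0
  rw [neg_zero] at this
  linarith

theorem Phibar_le_gphi_div {q : ℝ} (hq : 0 < q) : Phibar q ≤ gphi q / q := by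
  have hint : Integrable fun t => -t * gphi t / q := by
    simpa only [neg_mul, neg_div] using (integrable_mul_gphi.div_const q).fun_neg
  have htop : Tendsto (fun t => gphi t / q) atTop (𝓝 0) := by
    simpa using tendsto_gphi_atTop.div_const q
  refine setIntegral_Ioi_le_of_le_neg_deriv (f := fun t => gphi t / q)
    (fun t _ => (hasDerivAt_gphi t).div_const q) hint.integrableOn htop
    integrable_gphi.integrableOn fun t ht => ?_
  rw [neg_mul, neg_div, neg_neg, le_div_iff₀ hq, mul_comm]
  exact mul_le_mul_of_nonneg_right ht.le (gphi_pos t).le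

theorem div_mul_gphi_le_Phibar (q : ℝ) : q / (q ^ 2 + 1) * gphi q ≤ Phibar q := by
  have hden (t : ℝ) : 0 < t ^ 2 + 1 := by positivity
  have hderiv (t : ℝ) : HasDerivAt (fun t => t / (t ^ 2 + 1) * gphi t)
      ((2 / (t ^ 2 + 1) ^ 2 - 1) * gphi t) t := by
    have hd : HasDerivAt (fun t : ℝ => t ^ 2 + 1) (2 * t) t := by
      simpa using (hasDerivAt_pow 2 t).add_const 1
    refine (((hasDerivAt_id' t).fun_div hd (hden t).ne').fun_mul
      (hasDerivAt_gphi t)).congr_deriv ?_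
    field_simp
    ring
  have hcoef (t : ℝ) : 0 ≤ 2 / (t ^ 2 + 1) ^ 2 ∧ 2 / (t ^ 2 + 1) ^ 2 ≤ 2 :=
    ⟨by positivity, div_le_self two_pos.le (one_le_pow₀ (by nlinarith))⟩
  have hint : Integrable fun t => (2 / (t ^ 2 + 1) ^ 2 - 1) * gphi t := by
    refine integrable_gphi.bdd_mul (c := 1)
      (Continuous.aestronglyMeasurable (by fun_prop (disch := intro t; positivity)))
      (Eventually.of_forall fun t => ?_)
    rw [Real.norm_eq_abs, abs_le]
    constructor <;> linarith [hcoef t]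
  have htop : Tendsto (fun t => t / (t ^ 2 + 1) * gphi t) atTop (𝓝 0) := by
    refine squeeze_zero_norm (fun t => ?_) tendsto_gphi_atTop
    rw [norm_mul, Real.norm_of_nonneg (gphi_pos t).le]
    refine mul_le_of_le_one_left (gphi_pos t).le ?_
    rw [norm_div, Real.norm_of_nonneg (hden t).le, div_le_one (hden t), Real.norm_eq_abs]
    nlinarith [sq_abs t, abs_nonneg t]
  refine le_setIntegral_Ioi_of_neg_deriv_le (fun t _ => hderiv t) hint.integrableOn htop
    integrable_gphi.integrableOn fun t _ => ?_
  nlinarith [hcoef t, gphi_pos t]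

theorem tendsto_Phibar_atTop : Tendsto Phibar atTop (𝓝 0) := by
  refine tendsto_of_tendsto_of_tendsto_of_le_of_le' tendsto_const_nhds
    (tendsto_gphi_atTop.div_atTop tendsto_id) (Eventually.of_forall Phibar_nonneg) ?_
  filter_upwards [eventually_gt_atTop 0] with q hq using Phibar_le_gphi_div hq

theorem tendsto_Phibar_atBot : Tendsto Phibar atBot (𝓝 1) := by
  have : Tendsto (fun t => 1 - Phibar (-t)) atBot (𝓝 (1 - 0)) :=
    tendsto_const_nhds.sub (tendsto_Phibar_atTop.comp tendsto_neg_atBot_atTop)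
  simpa [Phibar_neg] using this

theorem Phibar_PhibarInv {x : ℝ} (hx : x ∈ Ioo 0 1) : Phibar (PhibarInv x) = x := by
  refine Function.invFun_eq (mem_range_of_exists_le_of_exists_ge continuous_Phibar ?_ ?_)
  · exact (tendsto_Phibar_atTop.eventually (ge_mem_nhds hx.1)).exists
  · exact (tendsto_Phibar_atBot.eventually (le_mem_nhds hx.2)).exists

theorem PhibarInv_pos {x : ℝ} (hx0 : 0 < x) (hx : x < 1 / 2) : 0 < PhibarInv x := by
  rw [← Phibar_strictAnti.lt_iff_gt, Phibar_PhibarInv ⟨hx0, by linarith⟩, Phibar_zero]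
  exact hx

theorem log_mul_div_gphi {x p : ℝ} (hx : 0 < x) (hp : 0 < p) :
    log (x * p / gphi p) = p ^ 2 / 2 - log (1 / x) + log (√(2 * π) * p) := by
  have hs : 0 < √(2 * π) := by positivity
  rw [log_div (by positivity) (gphi_pos p).ne', log_mul hx.ne' hp.ne', gphi,
    log_mul (by positivity) (exp_pos _).ne', log_inv, log_exp, log_mul hs.ne' hp.ne', one_div,
    log_inv]
  ring

theorem gaussian_quantile_log_bounds (x : ℝ) (hx0 : 0 < x) (hx : x < 1 / 2) :
    Real.log ((PhibarInv x) ^ 2 / ((PhibarInv x) ^ 2 + 1)) ≤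
      (PhibarInv x) ^ 2 / 2 - Real.log (1 / x) + Real.log (Real.sqrt (2 * Real.pi) * PhibarInv x) ∧
    (PhibarInv x) ^ 2 / 2 - Real.log (1 / x) + Real.log (Real.sqrt (2 * Real.pi) * PhibarInv x) ≤ 0 := by
  set q := PhibarInv x
  have hq : 0 < q := PhibarInv_pos hx0 hx
  have hqx : Phibar q = x := Phibar_PhibarInv ⟨hx0, by linarith⟩
  have hgq := gphi_pos q
  rw [← log_mul_div_gphi hx0 hq]
  constructor
  · refine log_le_log (by positivity) ?_
    rw [le_div_iff₀ hgq]
    calc q ^ 2 / (q ^ 2 + 1) * gphi q = q * (q / (q ^ 2 + 1) * gphi q) := by ring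
      _ ≤ q * x := by rw [← hqx]; gcongr; exact div_mul_gphi_le_Phibar q
      _ = x * q := mul_comm q x
  · refine log_nonpos (by positivity) ?_
    rw [div_le_one hgq, ← le_div_iff₀ hq, ← hqx]
    exact Phibar_le_gphi_div hq
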